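/- With H_0 = [E_0, F_0] where E_0 = −(∂_0^R + [H,∂_0^R]/2)/2 and F_0 = (α_0^+ − [H,α_0^+]/2)/2 and H = [α_0^+, ∂_0^R] on Λ*(V): on a degree-k basis monomial P, H_0(P) = −P if k is even and φ_0 appears in P; H_0(P) = P if k is odd and φ_0 does not appear in P; and H_0(P) = 0 otherwise. -/

import Mathlib

/-!
Fix `T ∌ 0` and put `x = φ_T`, `y = φ_0 ∧ φ_T`, `ε = (-1)^|T|`. Then `α_0⁺` and `∂_0^R` preserve
the plane spanned by `x` and `y`: `α_0⁺ x = y`, `α_0⁺ y = 0`, `∂_0^R x = 0`, `∂_0^R y = ε x`.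
On that plane `H = diag(-ε, ε)`, so `E_0 x = F_0 y = 0`, `E_0 y = ((1 - ε)/2) x` and
`F_0 x = ((1 - ε)/2) y`, whence `H_0 = diag(c, -c)` with `c = ((1 - ε)/2)^2`, which is `1`
for `|T|` odd and `0` for `|T|` even. As `y` has degree `|T| + 1`, this is the claimed
trichotomy.
-/

/-- The fermionic model of the exterior algebra `Λ*(V)` of an `n`-dimensional space with
basis `φ_0, …, φ_{n-1}`: the basis monomial `φ_{k_1} ∧ ⋯ ∧ φ_{k_d}` (`k_1 < ⋯ < k_d`)
corresponds to the indicator function of the set `{k_1, …, k_d}`. -/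
abbrev ExtV (n : ℕ) : Type := Finset (Fin n) → ℚ

/-- The basis monomial `φ_{k_1} ∧ ⋯ ∧ φ_{k_d}` corresponding to the set `T = {k_1,…,k_d}`. -/
noncomputable def mono (n : ℕ) (T : Finset (Fin n)) : ExtV n := Pi.single T 1

/-- The left wedge (creation) operator `α_i⁺ : v ↦ φ_i ∧ v` on basis monomials. -/
noncomputable def wedgeOp (n : ℕ) (i : Fin n) : Module.End ℚ (ExtV n) where
  toFun f S := if i ∈ S then (-1 : ℚ) ^ ((S.filter (· < i)).card) * f (S.erase i) else 0
  map_add' f g := by funext S; by_cases h : i ∈ S <;> simp [h, mul_add]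
  map_smul' c f := by
    funext S; by_cases h : i ∈ S <;> simp [h, Pi.smul_apply, smul_eq_mul]; ring

/-- The left partial derivative `∂_i^L`: on a sorted basis monomial containing `φ_i` as its
`s`-th factor it gives `(-1)^{s-1}` times the monomial with `φ_i` removed, else `0`. -/
noncomputable def delL (n : ℕ) (i : Fin n) : Module.End ℚ (ExtV n) where
  toFun f S := if i ∈ S then 0 else (-1 : ℚ) ^ ((S.filter (· < i)).card) * f (insert i S)
  map_add' f g := by funext S; by_cases h : i ∈ S <;> simp [h, mul_add]
  map_smul' c f := by
    funext S; by_cases h : i ∈ S <;> simp [h, Pi.smul_apply, smul_eq_mul]; ring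

/-- The right partial derivative `∂_i^R`: on a sorted degree-`d` basis monomial containing
`φ_i` as its `s`-th factor it gives `(-1)^{d-s}` times the monomial with `φ_i` removed,
else `0`. -/
noncomputable def delR (n : ℕ) (i : Fin n) : Module.End ℚ (ExtV n) where
  toFun f S := if i ∈ S then 0 else (-1 : ℚ) ^ ((S.filter (i < ·)).card) * f (insert i S)
  map_add' f g := by funext S; by_cases h : i ∈ S <;> simp [h, mul_add]
  map_smul' c f := by
    funext S; by_cases h : i ∈ S <;> simp [h, Pi.smul_apply, smul_eq_mul]; ring

section FermionPair

variable {K M : Type*} [Field K] [AddCommGroup M] [Module K M]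

/-- For `a = α_0⁺` and `b = ∂_0^R` these are the paper's `E_0`, `F_0` and `H_0`. -/
def sl2E (a b : Module.End K M) : Module.End K M :=
  -((2⁻¹ : K) • (b + (2⁻¹ : K) • ⁅⁅a, b⁆, b⁆))

def sl2F (a b : Module.End K M) : Module.End K M :=
  (2⁻¹ : K) • (a - (2⁻¹ : K) • ⁅⁅a, b⁆, a⁆)

def sl2H (a b : Module.End K M) : Module.End K M :=
  ⁅sl2E a b, sl2F a b⁆

structure IsFermionPair (a b : Module.End K M) (x y : M) (ε : K) : Prop where
  raise_left : a x = y
  raise_right : a y = 0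
  lower_left : b x = 0
  lower_right : b y = ε • x

lemma Module.End.commutator_apply (f g : Module.End K M) (v : M) :
    ⁅f, g⁆ v = f (g v) - g (f v) := by
  rw [Ring.lie_def]; rfl

/-- True also in characteristic `2`, where `2⁻¹ = 0`. -/
lemma inv_two_mul_two_mul_inv_two : (2⁻¹ : K) * 2 * 2⁻¹ = 2⁻¹ := by
  simpa using mul_inv_mul_cancel (2⁻¹ : K)

namespace IsFermionPair

variable {a b : Module.End K M} {x y : M} {ε : K} (h : IsFermionPair a b x y ε)
include h

lemma lie_apply_left : ⁅a, b⁆ x = -(ε • x) := by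
  simp [Module.End.commutator_apply, h.raise_left, h.lower_left, h.lower_right]

lemma lie_apply_right : ⁅a, b⁆ y = ε • y := by
  simp [Module.End.commutator_apply, h.raise_left, h.raise_right, h.lower_right]

lemma sl2E_apply_left : sl2E a b x = 0 := by
  simp [sl2E, Module.End.commutator_apply, h.lower_left, h.lie_apply_left]

lemma sl2F_apply_right : sl2F a b y = 0 := by
  simp [sl2F, Module.End.commutator_apply, h.raise_right, h.lie_apply_right]

lemma sl2E_apply_right (hε : ε * ε = 1) : sl2E a b y = ((1 - ε) / 2) • x := by
  simp only [sl2E, Module.End.commutator_apply, LinearMap.neg_apply, LinearMap.smul_apply,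
    LinearMap.add_apply, h.lower_right, h.lie_apply_right, map_smul, h.lie_apply_left]
  match_scalars
  linear_combination (2⁻¹ * 2⁻¹ * 2 : K) * hε + inv_two_mul_two_mul_inv_two (K := K)

lemma sl2F_apply_left : sl2F a b x = ((1 - ε) / 2) • y := by
  simp only [sl2F, Module.End.commutator_apply, LinearMap.smul_apply, LinearMap.sub_apply,
    h.raise_left, h.lie_apply_right, h.lie_apply_left, map_neg, map_smul]
  match_scalars
  linear_combination -ε * inv_two_mul_two_mul_inv_two (K := K)

lemma sl2H_apply_left (hε : ε * ε = 1) : sl2H a b x = ((1 - ε) / 2) ^ 2 • x := by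
  rw [sl2H, Module.End.commutator_apply, h.sl2F_apply_left, h.sl2E_apply_left, map_smul,
    h.sl2E_apply_right hε, map_zero, sub_zero, smul_smul, sq]

lemma sl2H_apply_right (hε : ε * ε = 1) : sl2H a b y = -(((1 - ε) / 2) ^ 2 • y) := by
  rw [sl2H, Module.End.commutator_apply, h.sl2F_apply_right, h.sl2E_apply_right hε, map_zero,
    map_smul, h.sl2F_apply_left, zero_sub, smul_smul, sq]

end IsFermionPair

end FermionPair

open Finset

section Monomials

variable {n : ℕ} {i : Fin n} {T : Finset (Fin n)}

lemma mono_apply (T S : Finset (Fin n)) : mono n T S = if S = T then 1 else 0 := by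
  simp [mono, Pi.single_apply]

lemma wedgeOp_mono_of_mem (hi : i ∈ T) : wedgeOp n i (mono n T) = 0 := by
  funext S
  have : S.erase i ≠ T := fun h ↦ notMem_erase i S (h ▸ hi)
  simp [wedgeOp, mono_apply, this]

lemma wedgeOp_mono_of_notMem (hi : i ∉ T) :
    wedgeOp n i (mono n T) = (-1 : ℚ) ^ #(T.filter (· < i)) • mono n (insert i T) := by
  funext S
  simp only [wedgeOp, LinearMap.coe_mk, AddHom.coe_mk, mono_apply, Pi.smul_apply, smul_eq_mul]
  by_cases hS : S = insert i T
  · subst hS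
    simp [erase_insert hi, filter_insert]
  · have : i ∈ S → S.erase i ≠ T := fun hiS h ↦ hS (h ▸ (insert_erase hiS).symm)
    split_ifs <;> simp_all

lemma delR_mono_of_notMem (hi : i ∉ T) : delR n i (mono n T) = 0 := by
  funext S
  have : insert i S ≠ T := fun h ↦ hi (h ▸ mem_insert_self i S)
  simp [delR, mono_apply, this]

lemma delR_mono_insert (hi : i ∉ T) :
    delR n i (mono n (insert i T)) = (-1 : ℚ) ^ #(T.filter (i < ·)) • mono n T := by
  funext S
  simp only [delR, LinearMap.coe_mk, AddHom.coe_mk, mono_apply, Pi.smul_apply, smul_eq_mul]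
  by_cases hS : S = T
  · subst hS
    simp [hi]
  · have : i ∉ S → insert i S ≠ insert i T := fun hiS h ↦
      hS (by simpa [erase_insert hiS, erase_insert hi] using congrArg (erase · i) h)
    split_ifs <;> simp_all

lemma card_filter_lt_add_card_filter_gt (hi : i ∉ T) :
    #(T.filter (· < i)) + #(T.filter (i < ·)) = #T := by
  rw [← card_filter_add_card_filter_not (s := T) (· < i)]
  congr 2
  refine filter_congr fun j hj ↦ ?_
  have : j ≠ i := fun h ↦ hi (h ▸ hj)
  omega

lemma isFermionPair_mono (hi : i ∉ T) :
    IsFermionPair (wedgeOp n i) (delR n i) (mono n T) (wedgeOp n i (mono n T))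
      ((-1 : ℚ) ^ #T) where
  raise_left := rfl
  raise_right := by
    rw [wedgeOp_mono_of_notMem hi, map_smul, wedgeOp_mono_of_mem (mem_insert_self i T), smul_zero]
  lower_left := delR_mono_of_notMem hi
  lower_right := by
    rw [wedgeOp_mono_of_notMem hi, map_smul, delR_mono_insert hi, smul_smul, ← pow_add,
      card_filter_lt_add_card_filter_gt hi]

end Monomials

section FirstGenerator

variable {n : ℕ} (hn : 0 < n) {T : Finset (Fin n)}

lemma wedgeOp_zero_mono_of_notMem (h0 : ⟨0, hn⟩ ∉ T) :
    wedgeOp n ⟨0, hn⟩ (mono n T) = mono n (insert ⟨0, hn⟩ T) := by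
  have : T.filter (· < (⟨0, hn⟩ : Fin n)) = ∅ :=
    filter_false_of_mem fun j _ ↦ by simp [Fin.lt_def]
  rw [wedgeOp_mono_of_notMem h0, this, card_empty, pow_zero, one_smul]

lemma sl2H_zero_mono_of_notMem (h0 : ⟨0, hn⟩ ∉ T) :
    sl2H (wedgeOp n ⟨0, hn⟩) (delR n ⟨0, hn⟩) (mono n T) =
      ((1 - (-1 : ℚ) ^ #T) / 2) ^ 2 • mono n T :=
  (isFermionPair_mono h0).sl2H_apply_left (by rw [← mul_pow]; norm_num)

lemma sl2H_zero_mono_of_mem (h0 : ⟨0, hn⟩ ∈ T) :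
    sl2H (wedgeOp n ⟨0, hn⟩) (delR n ⟨0, hn⟩) (mono n T) =
      -(((1 + (-1 : ℚ) ^ #T) / 2) ^ 2 • mono n T) := by
  have hpair := isFermionPair_mono (notMem_erase ⟨0, hn⟩ T)
  rw [wedgeOp_zero_mono_of_notMem hn (notMem_erase _ T), insert_erase h0] at hpair
  rw [hpair.sl2H_apply_right (by rw [← mul_pow]; norm_num), ← card_erase_add_one h0,
    pow_succ]
  ring_nf

end FirstGenerator

/-- with `H = [α_0⁺, ∂_0^R]`, `E_0 = -(∂_0^R + [H,∂_0^R]/2)/2`,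
`F_0 = (α_0⁺ - [H,α_0⁺]/2)/2` and `H_0 = [E_0, F_0]`: on a degree-`k` basis monomial `P`,
`H_0(P) = -P` if `k` is even and `φ_0` appears in `P`; `H_0(P) = P` if `k` is odd and `φ_0`
does not appear in `P`; and `H_0(P) = 0` otherwise. -/
theorem stmt16 (n : ℕ) (hn : 0 < n)
    (H E0 F0 H0 : Module.End ℚ (ExtV n))
    (hH : H = wedgeOp n ⟨0, hn⟩ * delR n ⟨0, hn⟩ - delR n ⟨0, hn⟩ * wedgeOp n ⟨0, hn⟩)
    (hE0 : E0 = -((2⁻¹ : ℚ) • (delR n ⟨0, hn⟩ +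
      (2⁻¹ : ℚ) • (H * delR n ⟨0, hn⟩ - delR n ⟨0, hn⟩ * H))))
    (hF0 : F0 = (2⁻¹ : ℚ) • (wedgeOp n ⟨0, hn⟩ -
      (2⁻¹ : ℚ) • (H * wedgeOp n ⟨0, hn⟩ - wedgeOp n ⟨0, hn⟩ * H)))
    (hH0 : H0 = E0 * F0 - F0 * E0)
    (T : Finset (Fin n)) :
    (Even T.card → (⟨0, hn⟩ : Fin n) ∈ T → H0 (mono n T) = -mono n T) ∧
    (Odd T.card → (⟨0, hn⟩ : Fin n) ∉ T → H0 (mono n T) = mono n T) ∧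
    ((Even T.card ∧ (⟨0, hn⟩ : Fin n) ∉ T) ∨ (Odd T.card ∧ (⟨0, hn⟩ : Fin n) ∈ T) →
      H0 (mono n T) = 0) := by
  have hH0 : H0 = sl2H (wedgeOp n ⟨0, hn⟩) (delR n ⟨0, hn⟩) := by
    subst hH0 hE0 hF0 hH
    simp only [sl2H, sl2E, sl2F, Ring.lie_def]
  subst hH0
  rcases Nat.even_or_odd #T with hT | hT <;> by_cases h0 : (⟨0, hn⟩ : Fin n) ∈ T <;>
    simp [h0, hT, hT.neg_one_pow, sl2H_zero_mono_of_mem, sl2H_zero_mono_of_notMem,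
      Nat.not_odd_iff_even]
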